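/- arXiv:math/0610121 — 7 statements merged into one kernel-verified Lean document; each statement's English description precedes it below -/
import Mathlib

section
/- Let K be a field and R = K[x,y]/(f) where f = y^3 - x^4 + p2*x^2*y + p1*x*y + p0*y + q2*x^2 + q1*x + q0. Let F = x^2 + a*y + b*x + c and G = x*y + d*y + e*x + f0 be elements of R with a ≠ 0. Then (y+e)*F - (x+b-d)*G is congruent, modulo the ideal generated by F and G, to y^2 + g*y + h*x + i, where g = a^{-1}*(c + d*(d-b)) + e, h = a^{-1}*(e*d - f0), and i = a^{-1}*(e*c + f0*(d-b)). In particular, y^2 + g*y + h*x + i lies in the ideal generated by F and G in R. -/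
open MvPolynomial

noncomputable section

/-- The normalized defining polynomial of a `C_{3,4}` curve:
`f = y^3 - x^4 + p2*x^2*y + p1*x*y + p0*y + q2*x^2 + q1*x + q0`,
with `x = X 0` and `y = X 1`. -/
def c34poly {K : Type*} [Field K] (p2 p1 p0 q2 q1 q0 : K) : MvPolynomial (Fin 2) K :=
  (X 1) ^ 3 - (X 0) ^ 4 + C p2 * (X 0) ^ 2 * X 1 + C p1 * X 0 * X 1 + C p0 * X 1
    + C q2 * (X 0) ^ 2 + C q1 * X 0 + C q0

/- The combination cancels the `x²y`, `x²` and `xy` terms of `F` and `G`, leaving `a` times a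
polynomial that is monic in `y`. -/
theorem c34_reduction_identity {K A : Type*} [Field K] [CommRing A] (φ : K →+* A) (x y : A)
    {a : K} (ha : a ≠ 0) (b c d e f0 : K) :
    (y + φ e) * (x ^ 2 + φ a * y + φ b * x + φ c)
        - (x + φ b - φ d) * (x * y + φ d * y + φ e * x + φ f0)
      = φ a * (y ^ 2 + φ (a⁻¹ * (c + d * (d - b)) + e) * y + φ (a⁻¹ * (e * d - f0)) * x
          + φ (a⁻¹ * (e * c + f0 * (d - b)))) := by
  have hinv : φ a * φ a⁻¹ = 1 := by rw [← map_mul, mul_inv_cancel₀ ha, map_one]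
  simp only [map_add, map_sub, map_mul]
  linear_combination (-(φ c + φ d * (φ d - φ b)) * y - (φ e * φ d - φ f0) * x
    - (φ e * φ c + φ f0 * (φ d - φ b))) * hinv

theorem mem_span_pair_of_sub_eq_unit_mul {A : Type*} [CommRing A] {F G u v a r : A}
    (ha : IsUnit a) (h : u * F - v * G = a * r) : r ∈ Ideal.span {F, G} := by
  rw [← Ideal.unit_mul_mem_iff_mem _ ha, ← h, Ideal.mem_span_pair]
  exact ⟨u, -v, by ring⟩

theorem stmt0 (K : Type*) [Field K] (p2 p1 p0 q2 q1 q0 a b c d e f0 : K) (ha : a ≠ 0) :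
    let R := MvPolynomial (Fin 2) K ⧸ Ideal.span {c34poly p2 p1 p0 q2 q1 q0}
    let π : MvPolynomial (Fin 2) K →+* R := Ideal.Quotient.mk _
    let xR : R := π (X 0)
    let yR : R := π (X 1)
    let Co : K → R := fun u => π (C u)
    let F : R := xR ^ 2 + Co a * yR + Co b * xR + Co c
    let G : R := xR * yR + Co d * yR + Co e * xR + Co f0
    let g : K := a⁻¹ * (c + d * (d - b)) + e
    let h : K := a⁻¹ * (e * d - f0)
    let i : K := a⁻¹ * (e * c + f0 * (d - b))
    ((yR + Co e) * F - (xR + Co b - Co d) * G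
        - (yR ^ 2 + Co g * yR + Co h * xR + Co i) ∈ Ideal.span {F, G})
      ∧ (yR ^ 2 + Co g * yR + Co h * xR + Co i ∈ Ideal.span {F, G}) := by
  intro R π xR yR Co F G g h i
  have key : (yR + Co e) * F - (xR + Co b - Co d) * G
      = Co a * (yR ^ 2 + Co g * yR + Co h * xR + Co i) :=
    c34_reduction_identity (π.comp C) xR yR ha b c d e f0
  have hT : yR ^ 2 + Co g * yR + Co h * xR + Co i ∈ Ideal.span {F, G} :=
    mem_span_pair_of_sub_eq_unit_mul ((IsUnit.mk0 a ha).map (π.comp C)) key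
  refine ⟨Ideal.sub_mem _ ?_ hT, hT⟩
  rw [key]
  exact Ideal.mul_mem_left _ _ hT
end
end

section
/- Let K be a field, R = K[x,y]/(f) with f = y^3 - x^4 + p2*x^2*y + p1*x*y + p0*y + q2*x^2 + q1*x + q0, and let F = x^2 + a*y + b*x + c, G = x*y + d*y + e*x + f0 in R with a ≠ 0. Suppose the quotient A = R/(F,G) is 3-dimensional as a K-vector space. Then the images of 1, x, y in A form a K-basis of A. -/
/-
The relations `F = 0` and `G = 0` write `x²` and `xy` as `K`-combinations of `1, x, y`, and
`y F - x G = a y² - e x² + (b - d) x y + c y - f0 x` does the same for `y²` because `a ≠ 0`.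
Hence `span K {1, x, y}` is closed under multiplication, i.e. it is a subalgebra; it contains
the algebra generators `x, y` of `A`, so it is all of `A`, and three spanning vectors of a
`3`-dimensional space are a basis.
-/

open MvPolynomial

noncomputable section

theorem MvPolynomial.adjoin_pair_X_eq_top_of_surjective {R A : Type*} [CommSemiring R]
    [Semiring A] [Algebra R A] {φ : MvPolynomial (Fin 2) R →ₐ[R] A} (hφ : Function.Surjective φ) :
    Algebra.adjoin R {φ (X 0), φ (X 1)} = ⊤ := by
  have : ({φ (X 0), φ (X 1)} : Set A) = φ '' Set.range X := by
    ext z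
    simp [Fin.exists_fin_two, eq_comm]
  rw [this, Algebra.adjoin_image, adjoin_range_X, Algebra.map_top, AlgHom.range_eq_top]
  exact hφ

theorem Submodule.span_one_pair_eq_top_of_mul_mem {R A : Type*} [CommSemiring R] [CommSemiring A]
    [Algebra R A] {x y : A} (hgen : Algebra.adjoin R {x, y} = ⊤)
    (hxx : x * x ∈ span R {1, x, y}) (hxy : x * y ∈ span R {1, x, y})
    (hyy : y * y ∈ span R {1, x, y}) : span R {1, x, y} = ⊤ := by
  set S := span R {(1 : A), x, y}
  have h1 : (1 : A) ∈ S := subset_span (by simp)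
  have hx : x ∈ S := subset_span (by simp)
  have hy : y ∈ S := subset_span (by simp)
  have hmul : ∀ u v, u ∈ S → v ∈ S → u * v ∈ S := by
    have : S * S ≤ S := by
      rw [span_mul_span, span_le]
      rintro _ ⟨u, hu, v, hv, rfl⟩
      have hyx : y * x ∈ S := mul_comm x y ▸ hxy
      rcases hu with rfl | rfl | rfl <;> rcases hv with rfl | rfl | rfl <;>
        simpa only [one_mul, mul_one]
    exact fun u v hu hv => this (mul_mem_mul hu hv)
  have hle : Algebra.adjoin R {x, y} ≤ S.toSubalgebra h1 hmul :=
    Algebra.adjoin_le (Set.pair_subset hx hy)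
  rw [hgen] at hle
  exact eq_top_iff.2 fun z _ => hle Algebra.mem_top

theorem mul_mem_span_one_pair_of_c34_relations {K A : Type*} [Field K] [CommRing A] [Algebra K A]
    {a b c d e f : K} {x y : A} (ha : a ≠ 0)
    (hF : x ^ 2 + algebraMap K A a * y + algebraMap K A b * x + algebraMap K A c = 0)
    (hG : x * y + algebraMap K A d * y + algebraMap K A e * x + algebraMap K A f = 0) :
    x * x ∈ Submodule.span K {1, x, y} ∧ x * y ∈ Submodule.span K {1, x, y} ∧
      y * y ∈ Submodule.span K {1, x, y} := by
  set S := Submodule.span K {(1 : A), x, y}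
  have hxx : x * x ∈ S := Submodule.mem_span_triple.2
    ⟨-c, -b, -a, by simp only [Algebra.smul_def, map_neg, mul_one]; linear_combination -hF⟩
  have hxy : x * y ∈ S := Submodule.mem_span_triple.2
    ⟨-f, -e, -d, by simp only [Algebra.smul_def, map_neg, mul_one]; linear_combination -hG⟩
  have hx : x ∈ S := Submodule.subset_span (by simp)
  have hy : y ∈ S := Submodule.subset_span (by simp)
  have hayy : a • (y * y) = e • (x * x) + (d - b) • (x * y) - c • y + f • x := by
    simp only [Algebra.smul_def, map_sub]
    linear_combination y * hF - x * hG
  refine ⟨hxx, hxy, ?_⟩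
  rw [← inv_smul_smul₀ ha (y * y), hayy]
  exact S.smul_mem _ (S.add_mem (S.sub_mem (S.add_mem (S.smul_mem _ hxx) (S.smul_mem _ hxy))
    (S.smul_mem _ hy)) (S.smul_mem _ hx))

theorem linearIndependent_of_span_eq_top_of_finrank_eq_three {K V : Type*} [Field K]
    [AddCommGroup V] [Module K V] {u v w : V} (hV : Module.finrank K V = 3)
    (hspan : Submodule.span K {u, v, w} = ⊤) : LinearIndependent K ![u, v, w] := by
  refine linearIndependent_of_top_le_span_of_card_eq_finrank ?_ (by simp [hV])
  rw [Matrix.range_cons, Matrix.range_cons_cons_empty, Set.singleton_union, hspan]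

theorem stmt1 (K : Type*) [Field K] (p2 p1 p0 q2 q1 q0 a b c d e f0 : K) (ha : a ≠ 0) :
    let R := MvPolynomial (Fin 2) K ⧸ Ideal.span {c34poly p2 p1 p0 q2 q1 q0}
    let π : MvPolynomial (Fin 2) K →+* R := Ideal.Quotient.mk _
    let xR : R := π (X 0)
    let yR : R := π (X 1)
    let Co : K → R := fun u => π (C u)
    let F : R := xR ^ 2 + Co a * yR + Co b * xR + Co c
    let G : R := xR * yR + Co d * yR + Co e * xR + Co f0
    let A := R ⧸ Ideal.span {F, G}
    let ρ : R →+* A := Ideal.Quotient.mk _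
    -- suppose `A = R/⟨F,G⟩` is 3-dimensional over `K`
    Module.finrank K A = 3 →
    -- then the images of 1, x, y form a K-basis of A
    (LinearIndependent K ![(1 : A), ρ xR, ρ yR]
      ∧ Submodule.span K {(1 : A), ρ xR, ρ yR} = ⊤) := by
  intro R π xR yR Co F G A ρ hdim
  have hF : ρ F = 0 := Ideal.Quotient.eq_zero_iff_mem.2 (Ideal.subset_span (by simp))
  have hG : ρ G = 0 := Ideal.Quotient.eq_zero_iff_mem.2 (Ideal.subset_span (by simp))
  simp only [F, G, map_add, map_mul, map_pow] at hF hG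
  obtain ⟨hxx, hxy, hyy⟩ :=
    mul_mem_span_one_pair_of_c34_relations (A := A) (x := ρ xR) (y := ρ yR) ha hF hG
  have hgen : Algebra.adjoin K {ρ xR, ρ yR} = ⊤ :=
    adjoin_pair_X_eq_top_of_surjective
      (φ := (Ideal.Quotient.mkₐ K _).comp (Ideal.Quotient.mkₐ K _))
      ((Ideal.Quotient.mkₐ_surjective K _).comp (Ideal.Quotient.mkₐ_surjective K _))
  have hspan := Submodule.span_one_pair_eq_top_of_mul_mem hgen hxx hxy hyy
  exact ⟨linearIndependent_of_span_eq_top_of_finrank_eq_three hdim hspan, hspan⟩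
end
end

section
/- Let R = K[x,y]/(f) be the coordinate ring of a nonsingular C_{3,4} curve, and ω0 = r2·dx − r1·dy ∈ Ω_{R/K} where 1 = r1·f_x + r2·f_y in R. Then Ω_{R/K} is a free R-module of rank 1 generated by ω0. -/
/-!
Write `dx, dy` for the differentials of the coordinates of `R = K[x,y]/(f)`. Differentiating
`f = 0` gives `f_x dx + f_y dy = 0`, which together with `r₁ f_x + r₂ f_y = 1` yields
`dx = f_y ω₀` and `dy = -f_x ω₀`; since `Ω_{R/K}` is spanned by `dx` and `dy`, `ω₀` generates it.
Conversely the Hamiltonian derivation `g ↦ f_y ∂_x g - f_x ∂_y g` of `K[x,y]` kills `f`, hence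
descends to `R`, and the induced linear form `Ω_{R/K} → R` sends `ω₀` to `r₁ f_x + r₂ f_y = 1`,
so `ω₀` has trivial annihilator.
-/

open MvPolynomial

noncomputable section

namespace KaehlerDifferential

variable {K : Type*} [CommRing K] {σ : Type*} [Fintype σ]

theorem D_eq_sum_pderiv_smul_D_X (g : MvPolynomial σ K) :
    D K (MvPolynomial σ K) g = ∑ i, pderiv i g • D K (MvPolynomial σ K) (X i) := by
  conv_lhs => rw [← (mvPolynomialBasis K σ).sum_repr (D K _ g)]
  simp

theorem D_algebraMap_eq_sum_pderiv {B : Type*} [CommRing B] [Algebra K B]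
    [Algebra (MvPolynomial σ K) B] [IsScalarTower K (MvPolynomial σ K) B]
    (g : MvPolynomial σ K) :
    D K B (algebraMap _ B g) =
      ∑ i, algebraMap _ B (pderiv i g) • D K B (algebraMap _ B (X i : MvPolynomial σ K)) := by
  rw [← map_D K K (MvPolynomial σ K) B, D_eq_sum_pderiv_smul_D_X, map_sum]
  simp [algebraMap_smul]

end KaehlerDifferential

namespace MvPolynomial

open KaehlerDifferential

variable {K : Type*} [CommRing K]

abbrev CoordRing (f : MvPolynomial (Fin 2) K) : Type _ := MvPolynomial (Fin 2) K ⧸ Ideal.span {f}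

abbrev CoordRing.mk (f : MvPolynomial (Fin 2) K) : MvPolynomial (Fin 2) K →+* CoordRing f :=
  Ideal.Quotient.mk _

def hamiltonian (f : MvPolynomial (Fin 2) K) :
    Derivation K (MvPolynomial (Fin 2) K) (MvPolynomial (Fin 2) K) :=
  pderiv 1 f • pderiv 0 - pderiv 0 f • pderiv 1

theorem hamiltonian_apply (f g : MvPolynomial (Fin 2) K) :
    hamiltonian f g = pderiv 1 f * pderiv 0 g - pderiv 0 f * pderiv 1 g := rfl

theorem hamiltonian_self (f : MvPolynomial (Fin 2) K) : hamiltonian f f = 0 := by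
  rw [hamiltonian_apply, mul_comm, sub_self]

theorem hamiltonian_X_zero (f : MvPolynomial (Fin 2) K) : hamiltonian f (X 0) = pderiv 1 f := by
  simp [hamiltonian_apply]

theorem hamiltonian_X_one (f : MvPolynomial (Fin 2) K) : hamiltonian f (X 1) = -pderiv 0 f := by
  simp [hamiltonian_apply]

theorem hamiltonian_mem_span_singleton {f g : MvPolynomial (Fin 2) K} (hg : g ∈ Ideal.span {f}) :
    hamiltonian f g ∈ Ideal.span {f} := by
  obtain ⟨c, rfl⟩ := Ideal.mem_span_singleton.mp hg
  rw [Derivation.leibniz, hamiltonian_self, smul_zero, add_zero, smul_eq_mul]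
  exact Ideal.mem_span_singleton.mpr (dvd_mul_right _ _)

theorem mkₐ_hamiltonian_eq_zero (f g : MvPolynomial (Fin 2) K)
    (hg : Ideal.Quotient.mkₐ K (Ideal.span {f}) g = 0) :
    Ideal.Quotient.mkₐ K (Ideal.span {f}) (hamiltonian f g) = 0 := by
  rw [Ideal.Quotient.mkₐ_eq_mk, Ideal.Quotient.eq_zero_iff_mem] at hg ⊢
  exact hamiltonian_mem_span_singleton hg

def quotientHamiltonian (f : MvPolynomial (Fin 2) K) :
    Derivation K (CoordRing f) (CoordRing f) :=
  Derivation.liftOfSurjective (Ideal.Quotient.mkₐ_surjective K _) (mkₐ_hamiltonian_eq_zero f)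

theorem quotientHamiltonian_mk (f g : MvPolynomial (Fin 2) K) :
    quotientHamiltonian f (CoordRing.mk f g) = CoordRing.mk f (hamiltonian f g) :=
  Derivation.liftOfSurjective_apply _ (mkₐ_hamiltonian_eq_zero f) g

theorem D_mk_relation (f : MvPolynomial (Fin 2) K) :
    CoordRing.mk f (pderiv 0 f) • D K (CoordRing f) (CoordRing.mk f (X 0)) +
      CoordRing.mk f (pderiv 1 f) • D K (CoordRing f) (CoordRing.mk f (X 1)) = 0 := by
  have h := D_algebraMap_eq_sum_pderiv (B := CoordRing f) f
  rwa [Ideal.Quotient.algebraMap_eq, Ideal.Quotient.mk_singleton_self, map_zero, Fin.sum_univ_two,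
    eq_comm] at h

variable {f : MvPolynomial (Fin 2) K}

def bezoutForm (r₁ r₂ : CoordRing f) : Ω[CoordRing f⁄K] :=
  r₂ • D K (CoordRing f) (CoordRing.mk f (X 0)) -
    r₁ • D K (CoordRing f) (CoordRing.mk f (X 1))

variable {r₁ r₂ : CoordRing f}
  (hr : r₁ * CoordRing.mk f (pderiv 0 f) + r₂ * CoordRing.mk f (pderiv 1 f) = 1)
include hr

theorem D_mk_X_zero_eq_smul_bezoutForm :
    D K (CoordRing f) (CoordRing.mk f (X 0)) =
      CoordRing.mk f (pderiv 1 f) • bezoutForm r₁ r₂ := by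
  rw [bezoutForm]
  linear_combination (norm := module)
    -(hr • D K (CoordRing f) (CoordRing.mk f (X 0))) + r₁ • D_mk_relation f

theorem D_mk_X_one_eq_smul_bezoutForm :
    D K (CoordRing f) (CoordRing.mk f (X 1)) =
      -CoordRing.mk f (pderiv 0 f) • bezoutForm r₁ r₂ := by
  rw [bezoutForm]
  linear_combination (norm := module)
    -(hr • D K (CoordRing f) (CoordRing.mk f (X 1))) + r₂ • D_mk_relation f

theorem span_bezoutForm_eq_top : Submodule.span (CoordRing f) {bezoutForm r₁ r₂} = ⊤ := by
  rw [eq_top_iff, ← span_range_derivation K (CoordRing f), Submodule.span_le]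
  rintro _ ⟨s, rfl⟩
  obtain ⟨g, rfl⟩ := Ideal.Quotient.mk_surjective s
  have hω := Submodule.mem_span_singleton_self (R := CoordRing f) (bezoutForm r₁ r₂)
  rw [← Ideal.Quotient.algebraMap_eq, D_algebraMap_eq_sum_pderiv, Fin.sum_univ_two,
    Ideal.Quotient.algebraMap_eq, D_mk_X_zero_eq_smul_bezoutForm hr,
    D_mk_X_one_eq_smul_bezoutForm hr]
  exact add_mem (Submodule.smul_mem _ _ (Submodule.smul_mem _ _ hω))
    (Submodule.smul_mem _ _ (Submodule.smul_mem _ _ hω))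

theorem liftKaehlerDifferential_quotientHamiltonian_bezoutForm :
    (quotientHamiltonian f).liftKaehlerDifferential (bezoutForm r₁ r₂) = 1 := by
  rw [bezoutForm, map_sub, map_smul, map_smul, Derivation.liftKaehlerDifferential_comp_D,
    Derivation.liftKaehlerDifferential_comp_D, quotientHamiltonian_mk, quotientHamiltonian_mk,
    hamiltonian_X_zero, hamiltonian_X_one, ← hr]
  simp only [smul_eq_mul, map_neg]
  ring

theorem eq_zero_of_smul_bezoutForm_eq_zero {r : CoordRing f} (h : r • bezoutForm r₁ r₂ = 0) :
    r = 0 := by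
  simpa [liftKaehlerDifferential_quotientHamiltonian_bezoutForm hr] using
    congrArg (quotientHamiltonian f).liftKaehlerDifferential h

end MvPolynomial

theorem stmt9_general (K : Type*) [Field K] (p2 p1 p0 q2 q1 q0 : K) :
    let f : MvPolynomial (Fin 2) K := c34poly p2 p1 p0 q2 q1 q0
    let R := MvPolynomial (Fin 2) K ⧸ Ideal.span {f}
    let π : MvPolynomial (Fin 2) K →+* R := Ideal.Quotient.mk _
    let xR : R := π (X 0)
    let yR : R := π (X 1)
    let fx : R := π (pderiv 0 f)
    let fy : R := π (pderiv 1 f)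
    let d : R → Ω[R⁄K] := fun r => KaehlerDifferential.D K R r
    ∀ r1 r2 : R, r1 * fx + r2 * fy = 1 →
      let ω0 : Ω[R⁄K] := r2 • d xR - r1 • d yR
      Submodule.span R {ω0} = ⊤ ∧ ∀ r : R, r • ω0 = 0 → r = 0 := by
  intro f R π xR yR fx fy d r1 r2 hr ω0
  exact ⟨span_bezoutForm_eq_top hr, fun _ ↦ eq_zero_of_smul_bezoutForm_eq_zero hr⟩

/-- Let `R = K[x,y]/(f)` be the coordinate ring of a nonsingular `C_{3,4}` curve
(in particular a domain), with `1 = r1·f_x + r2·f_y`, and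
`ω0 = r2·dx − r1·dy ∈ Ω_{R/K}`.  Then `Ω_{R/K}` is a free `R`-module of rank 1
generated by `ω0`: `ω0` spans `Ω_{R/K}` over `R` and has trivial annihilator. -/
theorem stmt9 (K : Type*) [Field K] (p2 p1 p0 q2 q1 q0 : K)
    (hdom : IsDomain (MvPolynomial (Fin 2) K ⧸
      Ideal.span {c34poly p2 p1 p0 q2 q1 q0})) :
    let f : MvPolynomial (Fin 2) K := c34poly p2 p1 p0 q2 q1 q0
    let R := MvPolynomial (Fin 2) K ⧸ Ideal.span {f}
    let π : MvPolynomial (Fin 2) K →+* R := Ideal.Quotient.mk _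
    let xR : R := π (X 0)
    let yR : R := π (X 1)
    let fx : R := π (pderiv 0 f)
    let fy : R := π (pderiv 1 f)
    let d : R → Ω[R⁄K] := fun r => KaehlerDifferential.D K R r
    ∀ r1 r2 : R, r1 * fx + r2 * fy = 1 →
      let ω0 : Ω[R⁄K] := r2 • d xR - r1 • d yR
      Submodule.span R {ω0} = ⊤ ∧ ∀ r : R, r • ω0 = 0 → r = 0 :=
  stmt9_general K p2 p1 p0 q2 q1 q0
end
end

section
/- Let R = K[x,y]/(f) with f = y^3 − x^4 + p2·x²y + p1·xy + p0·y + q2·x² + q1·x + q0, and let F'' = x² + a''·y + b''·x + c'' and G'' = x·y + d''·y + e''·x + f'' with a'' ≠ 0. Set m = e'' + a''·(a'' + p2), ℓ = c'' + (d''−b'')·d'', G''' = x·y + (b''−d'')·y − (ℓ/a'' + m)·x + [m·d'' + (ℓ/a'' + e'')·(d''−b'') + a''·(a''·b'' − p1) − f''], and H = −y² + a''·x² + (ℓ/a'')·y − a''·b''·x + [(ℓ/a'' + m)·e'' + a''·(b''² − c'' − q2)]. Then G''·G''' + F''·H lies in the K-span of {1, x, y} inside R. -/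
/-!
Compare coefficients of `G''·G''' + F''·H + a''·f`. The monomials `x²y²` and `x y²` cancel between
the two products, `x⁴` and `y³` cancel against `a''·f`, and the coefficients of `x² y`, `x y`, `x²`
and `y²` vanish: for `x² y` by the choice of `m`, for `x y` and `x²` by the choice of the constant
terms of `G'''` and `H`, and for `y²` because `a''·(ℓ/a'') = ℓ = c'' + (d''−b'')·d''`. What is
left is an element of the span of `1, x, y`.
-/

open MvPolynomial

noncomputable section

section

variable {K R : Type*} [Field K] [CommRing R] [Algebra K R]

theorem aeval_mk_X_fin_two (I : Ideal (MvPolynomial (Fin 2) K)) (p : MvPolynomial (Fin 2) K) :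
    aeval ![Ideal.Quotient.mk I (X 0), Ideal.Quotient.mk I (X 1)] p = Ideal.Quotient.mk I p := by
  have hpt : ![Ideal.Quotient.mk I (X 0), Ideal.Quotient.mk I (X 1)] =
      fun i => Ideal.Quotient.mkₐ K I (X i) := by
    funext i
    fin_cases i <;> rfl
  rw [hpt, ← comp_aeval_apply, aeval_X_left_apply, Ideal.Quotient.mkₐ_eq_mk]

theorem algebraMap_add_mul_add_mul_mem_span (α β γ : K) (x y : R) :
    algebraMap K R α + algebraMap K R β * x + algebraMap K R γ * y ∈
      Submodule.span K {(1 : R), x, y} := by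
  rw [← Algebra.smul_def, ← Algebra.smul_def, Algebra.algebraMap_eq_smul_one]
  refine add_mem (add_mem ?_ ?_) ?_ <;>
    exact Submodule.smul_mem _ _ (Submodule.subset_span (by simp))

theorem c34poly_mul_add_mul_eq {p2 p1 p0 q2 q1 q0 : K} {x y : R}
    (hxy : aeval ![x, y] (c34poly p2 p1 p0 q2 q1 q0) = 0)
    {a b c d e f lam m k h : K} (hlam : a * lam = c + (d - b) * d) (hm : m = e + a * (a + p2))
    (hk : k = m * d + (lam + e) * (d - b) + a * (a * b - p1) - f)
    (hh : h = (lam + m) * e + a * (b ^ 2 - c - q2)) :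
    let φ := algebraMap K R
    (x * y + φ d * y + φ e * x + φ f) * (x * y + φ (b - d) * y - φ (lam + m) * x + φ k)
        + (x ^ 2 + φ a * y + φ b * x + φ c) * (-y ^ 2 + φ a * x ^ 2 + φ lam * y - φ (a * b) * x + φ h)
      = φ (f * k + c * h + a * q0) + φ (e * k - f * (lam + m) + b * h - a * b * c + a * q1) * x
        + φ (d * k + f * (b - d) + a * h + c * lam + a * p0) * y := by
  intro φ
  have hlamR := congrArg φ hlam
  simp only [c34poly, map_add, map_sub, map_mul, map_pow, aeval_X, aeval_C,
    Matrix.cons_val_zero, Matrix.cons_val_one] at hxy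
  subst hm hk hh
  simp only [φ, map_add, map_sub, map_mul, map_pow] at hlamR ⊢
  linear_combination (-algebraMap K R a) * hxy + y ^ 2 * hlamR

end

/-- With the explicit formulas for `G'''` and `H`, the combination
`G''·G''' + F''·H` lies in the K-span of `{1, x, y}` in `R = K[x,y]/(f)`. -/
theorem stmt10 (K : Type*) [Field K] (p2 p1 p0 q2 q1 q0 a'' b'' c'' d'' e'' f'' : K)
    (ha : a'' ≠ 0) :
    let R := MvPolynomial (Fin 2) K ⧸ Ideal.span {c34poly p2 p1 p0 q2 q1 q0}
    let π : MvPolynomial (Fin 2) K →+* R := Ideal.Quotient.mk _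
    let xR : R := π (X 0)
    let yR : R := π (X 1)
    let Co : K → R := fun u => π (C u)
    let F'' : R := xR ^ 2 + Co a'' * yR + Co b'' * xR + Co c''
    let G'' : R := xR * yR + Co d'' * yR + Co e'' * xR + Co f''
    let m : K := e'' + a'' * (a'' + p2)
    let l : K := c'' + (d'' - b'') * d''
    let G''' : R := xR * yR + Co (b'' - d'') * yR - Co (l * a''⁻¹ + m) * xR
      + Co (m * d'' + (l * a''⁻¹ + e'') * (d'' - b'') + a'' * (a'' * b'' - p1) - f'')
    let H : R := -yR ^ 2 + Co a'' * xR ^ 2 + Co (l * a''⁻¹) * yR - Co (a'' * b'') * xR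
      + Co ((l * a''⁻¹ + m) * e'' + a'' * (b'' ^ 2 - c'' - q2))
    G'' * G''' + F'' * H ∈ Submodule.span K {(1 : R), xR, yR} := by
  intro R π xR yR Co F'' G'' m l G''' H
  have hxy : aeval ![xR, yR] (c34poly p2 p1 p0 q2 q1 q0) = 0 := by
    rw [aeval_mk_X_fin_two]
    exact Ideal.Quotient.mk_singleton_self _
  have hlam : a'' * (l * a''⁻¹) = c'' + (d'' - b'') * d'' := by
    rw [mul_left_comm, mul_inv_cancel₀ ha, mul_one]
  have hcomb : G'' * G''' + F'' * H = _ := c34poly_mul_add_mul_eq hxy hlam rfl rfl rfl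
  rw [hcomb]
  exact algebraMap_add_mul_add_mul_mem_span _ _ _ xR yR
end
end

section
/- Let R = K[x,y]/(f) be the coordinate ring of a C_{3,4} curve, D'' an effective typical divisor of degree 3 with W^4_{D''} := L(4P∞ − D'') = 0, and F'', G'' a basis of W^7_{D''} of the standard form (F'' = x² + a''y + b''x + c'', G'' = xy + d''y + e''x + f'', a'' ≠ 0). If G''' and H are the explicit elements defined by the formulas G''' = xy + (b''−d'')y − (ℓ/a''+m)x + [md'' + (ℓ/a''+e'')(d''−b'') + a''(a''b''−p1) − f''] and H = −y² + a''x² + (ℓ/a'')y − a''b''x + [(ℓ/a''+m)e'' + a''(b''²−c''−q2)], with m = e'' + a''(a''+p2) and ℓ = c'' + (d''−b'')d'', then G''·G''' + F''·H = 0 in R. -/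
open MvPolynomial

noncomputable section

set_option synthInstance.maxHeartbeats 1000000 in
set_option maxHeartbeats 2000000 in
/-- Suppose `F'', G''` represent a typical degree-3 divisor `D''`, i.e. the only
element of the span of `{1, x, y}` (which is `W^4`) vanishing on `D''` (i.e. lying
in the ideal `⟨F'', G''⟩`) is `0` (this encodes `W^4_{D''} = L(4P∞ - D'') = 0`).
Then with the explicit formulas for `G'''` and `H` one has
`G''·G''' + F''·H = 0` in `R`. -/
theorem stmt11 (K : Type*) [Field K] (p2 p1 p0 q2 q1 q0 a'' b'' c'' d'' e'' f'' : K)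
    (ha : a'' ≠ 0) :
    let R := MvPolynomial (Fin 2) K ⧸ Ideal.span {c34poly p2 p1 p0 q2 q1 q0}
    let π : MvPolynomial (Fin 2) K →+* R := Ideal.Quotient.mk _
    let xR : R := π (X 0)
    let yR : R := π (X 1)
    let Co : K → R := fun u => π (C u)
    let F'' : R := xR ^ 2 + Co a'' * yR + Co b'' * xR + Co c''
    let G'' : R := xR * yR + Co d'' * yR + Co e'' * xR + Co f''
    let m : K := e'' + a'' * (a'' + p2)
    let l : K := c'' + (d'' - b'') * d''
    let G''' : R := xR * yR + Co (b'' - d'') * yR - Co (l * a''⁻¹ + m) * xR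
      + Co (m * d'' + (l * a''⁻¹ + e'') * (d'' - b'') + a'' * (a'' * b'' - p1) - f'')
    let H : R := -yR ^ 2 + Co a'' * xR ^ 2 + Co (l * a''⁻¹) * yR - Co (a'' * b'') * xR
      + Co ((l * a''⁻¹ + m) * e'' + a'' * (b'' ^ 2 - c'' - q2))
    -- typicality: `W^4_{D''} = 0`, i.e. no nonzero element of span{1, x, y}
    -- vanishes on `D''`
    (∀ r : R, r ∈ Submodule.span K {(1 : R), xR, yR} →
        r ∈ Ideal.span {F'', G''} → r = 0) →
    G'' * G''' + F'' * H = 0 := by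
  intro R π xR yR Co F'' G'' m l G''' H htyp
  obtain ⟨t, ht⟩ : ∃ t : K, l * a''⁻¹ = t := ⟨_, rfl⟩
  have hat : a'' * t = l := by rw [← ht]; field_simp
  have hc : c'' = a'' * t - (d'' - b'') * d'' := by
    simp only [l] at hat
    linear_combination -hat
  -- the curve relation in R
  have h0 : π (c34poly p2 p1 p0 q2 q1 q0) = 0 :=
    Ideal.Quotient.eq_zero_iff_mem.mpr (Ideal.subset_span rfl)
  simp only [c34poly, map_add, map_sub, map_mul, map_pow] at h0
  -- the key linear expression
  have hkey : G'' * G''' + F'' * H =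
      Co ((-1) * f'' ^ 2 + (2) * d''*e''*f'' + (-1) * d'' ^ 2*e'' ^ 2 + (1) * t*d''*f'' + (-1) * t*d'' ^ 2*e'' + (-1) * b''*e''*f'' + (1) * b''*d''*e'' ^ 2 + (-1) * b''*t*f'' + (1) * b''*t*d''*e'' + (1) * a''*q0 + (-1) * a''*f''*p1 + (1) * a''*d''*f''*p2 + (1) * a''*d'' ^ 2*q2 + (-1) * a''*d'' ^ 2*e''*p2 + (-1) * a''*d'' ^ 4 + (1) * a''*t*e'' ^ 2 + (1) * a''*t ^ 2*e'' + (-1) * a''*b''*d''*q2 + (1) * a''*b''*d''*e''*p2 + (2) * a''*b''*d'' ^ 3 + (-2) * a''*b'' ^ 2*d'' ^ 2 + (1) * a''*b'' ^ 3*d'' + (1) * a'' ^ 2*d''*f'' + (-1) * a'' ^ 2*d'' ^ 2*e'' + (-1) * a'' ^ 2*t*q2 + (1) * a'' ^ 2*t*e''*p2 + (2) * a'' ^ 2*t*d'' ^ 2 + (1) * a'' ^ 2*b''*f'' + (1) * a'' ^ 2*b''*d''*e'' + (-2) * a'' ^ 2*b''*t*d'' + (1) * a'' ^ 2*b'' ^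 2*t + (1) * a'' ^ 3*t*e'' + (-1) * a'' ^ 3*t ^ 2) * 1
      + Co ((-2) * e''*f'' + (2) * d''*e'' ^ 2 + (-1) * t*f'' + (1) * t*d''*e'' + (1) * a''*q1 + (-1) * a''*f''*p2 + (-1) * a''*e''*p1 + (1) * a''*d''*e''*p2 + (-1) * a''*b''*q2 + (1) * a''*b''*e''*p2 + (2) * a''*b''*d'' ^ 2 + (-2) * a''*b'' ^ 2*d'' + (1) * a''*b'' ^ 3 + (-1) * a'' ^ 2*f'' + (1) * a'' ^ 2*d''*e'' + (2) * a'' ^ 2*b''*e'' + (-2) * a'' ^ 2*b''*t) * xR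
      + Co ((-2) * d''*f'' + (2) * d'' ^ 2*e'' + (1) * b''*f'' + (-1) * b''*d''*e'' + (1) * a''*p0 + (1) * a''*e'' ^ 2 + (-1) * a''*d''*p1 + (1) * a''*d'' ^ 2*p2 + (1) * a''*t*e'' + (1) * a''*t ^ 2 + (-1) * a'' ^ 2*q2 + (1) * a'' ^ 2*e''*p2 + (2) * a'' ^ 2*d'' ^ 2 + (1) * a'' ^ 2*b'' ^ 2 + (1) * a'' ^ 3*e'' + (-1) * a'' ^ 3*t) * yR := by
    simp only [F'', G'', G''', H, m]
    rw [ht, hc]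
    simp only [Co, xR, yR]
    simp only [map_add, map_sub, map_mul, map_pow, map_neg, map_one, map_ofNat]
    linear_combination (-(π (C a''))) * h0
  refine htyp _ ?_ (Ideal.mem_span_pair.mpr ⟨H, G''', by ring⟩)
  rw [hkey]
  have hsm : ∀ (u : K) (w : R), Co u * w = u • w := by
    intro u w
    obtain ⟨v, rfl⟩ := Ideal.Quotient.mk_surjective w
    show π (C u) * π v = _
    rw [← map_mul, ← MvPolynomial.smul_eq_C_mul]
    exact Submodule.Quotient.mk_smul _ u v
  rw [hsm, hsm, hsm]
  refine Submodule.add_mem _ (Submodule.add_mem _ ?_ ?_) ?_ <;>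
    exact Submodule.smul_mem _ _ (Submodule.subset_span (by simp))
end
end

section
/- Let K be a field, C a smooth projective curve over K of genus 3, P∞ a K-rational point, and D, D' effective K-rational divisors of degree 3 avoiding P∞ with D + D' typical (meaning dim L(N·P∞ − D − D') = max(0, N−8) for N ≥ 8). Let s be a nonzero element of the 1-dimensional space L(9P∞ − D − D'). Then div(s) = D + D' + D'' − 9P∞ for some effective K-rational divisor D'' of degree 3, and the divisor class [D − 3P∞] + [D' − 3P∞] + [D'' − 3P∞] = 0 in the Jacobian of C. -/
noncomputable section

/-- Abstract data of a smooth projective (geometrically irreducible) curve over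
a field `K`, recording exactly what is needed to speak of divisors,
Riemann–Roch spaces and the genus: a set of closed points `Pt` with their
degrees, a function field `Fn`, the divisor of a nonzero function, the
Riemann–Roch space `L D ⊆ Fn` of a divisor `D` (`f ∈ L D ↔ div(f) + D ≥ 0`
for `f ≠ 0`), and the Riemann–Roch theorem in the range `deg D > 2g − 2`
(which pins down the genus). -/
structure ProjCurve (K : Type*) [Field K] where
  /-- closed points of the curve -/
  Pt : Type*
  /-- the function field -/
  Fn : Type*
  [fieldFn : Field Fn]
  [algFn : Algebra K Fn]
  /-- the genus -/
  genus : ℕ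
  /-- degree of a closed point (`1` for `K`-rational points) -/
  degPt : Pt → ℕ
  degPt_pos : ∀ p, 0 < degPt p
  /-- the divisor of a (nonzero) function -/
  divisor : Fn → (Pt →₀ ℤ)
  divisor_mul : ∀ f g : Fn, f ≠ 0 → g ≠ 0 → divisor (f * g) = divisor f + divisor g
  /-- the Riemann–Roch space `L(D)` of a divisor -/
  L : (Pt →₀ ℤ) → Submodule K Fn
  mem_L : ∀ (D : Pt →₀ ℤ) (f : Fn), f ≠ 0 → (f ∈ L D ↔ 0 ≤ divisor f + D)
  /-- Riemann–Roch for divisors of degree `> 2g − 2` -/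
  riemann_roch : ∀ D : Pt →₀ ℤ,
    2 * (genus : ℤ) - 2 < D.sum (fun p n => n * degPt p) →
    (Module.finrank K (L D) : ℤ) = D.sum (fun p n => n * degPt p) + 1 - genus

attribute [instance] ProjCurve.fieldFn ProjCurve.algFn

/-- The degree of a divisor. -/
def ProjCurve.degDiv {K : Type*} [Field K] (C : ProjCurve K) (D : C.Pt →₀ ℤ) : ℤ :=
  D.sum fun p n => n * C.degPt p

namespace ProjCurveAux

variable {K : Type*} [Field K]

/-- Degree of a divisor, as an additive group homomorphism. -/
def degHom (C : ProjCurve K) : (C.Pt →₀ ℤ) →+ ℤ :=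
  Finsupp.liftAddHom fun p => AddMonoidHom.mulRight (C.degPt p : ℤ)

lemma degDiv_eq (C : ProjCurve K) (D : C.Pt →₀ ℤ) : C.degDiv D = degHom C D := by
  rfl

lemma degHom_single (C : ProjCurve K) (p : C.Pt) (n : ℤ) :
    degHom C (Finsupp.single p n) = n * C.degPt p := by
  simp [degHom]

lemma divisor_one (C : ProjCurve K) : C.divisor 1 = 0 := by
  have h := C.divisor_mul 1 1 one_ne_zero one_ne_zero
  rw [mul_one] at h
  exact (left_eq_add.mp h)

lemma divisor_inv (C : ProjCurve K) (f : C.Fn) (hf : f ≠ 0) :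
    C.divisor f⁻¹ = -C.divisor f := by
  have h := C.divisor_mul f f⁻¹ hf (inv_ne_zero hf)
  rw [mul_inv_cancel₀ hf, divisor_one] at h
  exact eq_neg_of_add_eq_zero_right h.symm

/-- Multiplication by a nonzero function, as a `K`-linear automorphism of the
function field. -/
def mulEquiv (C : ProjCurve K) (f : C.Fn) (hf : f ≠ 0) : C.Fn ≃ₗ[K] C.Fn where
  toFun x := f * x
  invFun x := f⁻¹ * x
  map_add' := mul_add f
  map_smul' c x := (mul_smul_comm c f x)
  left_inv x := by field_simp
  right_inv x := by field_simp

lemma map_L (C : ProjCurve K) (f : C.Fn) (hf : f ≠ 0) (E : C.Pt →₀ ℤ) :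
    (C.L (E + C.divisor f)).map (mulEquiv C f hf : C.Fn →ₗ[K] C.Fn) = C.L E := by
  ext y
  simp only [Submodule.mem_map]
  constructor
  · rintro ⟨x, hx, rfl⟩
    show f * x ∈ C.L E
    by_cases hx0 : x = 0
    · simp [hx0]
    · rw [C.mem_L _ _ (mul_ne_zero hf hx0), C.divisor_mul f x hf hx0]
      have := (C.mem_L _ x hx0).mp hx
      calc (0 : C.Pt →₀ ℤ) ≤ C.divisor x + (E + C.divisor f) := this
        _ = C.divisor f + C.divisor x + E := by abel
  · intro hy
    refine ⟨f⁻¹ * y, ?_, ?_⟩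
    · by_cases hy0 : y = 0
      · simp [hy0]
      · rw [C.mem_L _ _ (mul_ne_zero (inv_ne_zero hf) hy0),
          C.divisor_mul f⁻¹ y (inv_ne_zero hf) hy0, divisor_inv C f hf]
        have := (C.mem_L _ y hy0).mp hy
        calc (0 : C.Pt →₀ ℤ) ≤ C.divisor y + E := this
          _ = -C.divisor f + C.divisor y + (E + C.divisor f) := by abel
    · show f * (f⁻¹ * y) = y
      field_simp

lemma finrank_L_add_divisor (C : ProjCurve K) (f : C.Fn) (hf : f ≠ 0) (E : C.Pt →₀ ℤ) :
    Module.finrank K (C.L (E + C.divisor f)) = Module.finrank K (C.L E) := by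
  rw [← map_L C f hf E]
  exact (LinearEquiv.finrank_map_eq (mulEquiv C f hf) (C.L (E + C.divisor f))).symm

lemma riemann_roch' (C : ProjCurve K) (E : C.Pt →₀ ℤ)
    (h : 2 * (C.genus : ℤ) - 2 < degHom C E) :
    (Module.finrank K (C.L E) : ℤ) = degHom C E + 1 - C.genus := by
  have := C.riemann_roch E (by rwa [show E.sum (fun p n => n * C.degPt p) = degHom C E from rfl])
  rwa [show E.sum (fun p n => n * C.degPt p) = degHom C E from rfl] at this

/-- The divisor of a nonzero function has degree zero. -/
lemma deg_divisor_eq_zero (C : ProjCurve K) (Pinf : C.Pt) (hP : C.degPt Pinf = 1)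
    (f : C.Fn) (hf : f ≠ 0) : degHom C (C.divisor f) = 0 := by
  set d : ℤ := degHom C (C.divisor f) with hd
  set n : ℤ := 2 * C.genus + 3 + |d| with hn
  have habs : -|d| ≤ d ∧ d ≤ |d| := ⟨neg_abs_le d, le_abs_self d⟩
  have hdeg1 : degHom C (Finsupp.single Pinf n) = n := by
    rw [degHom_single, hP]; ring
  have h1 : (Module.finrank K (C.L (Finsupp.single Pinf n)) : ℤ)
      = n + 1 - C.genus := by
    rw [riemann_roch' C _ (by rw [hdeg1, hn]; linarith [habs.1, habs.2]), hdeg1]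
  have h2 : (Module.finrank K (C.L (Finsupp.single Pinf n + C.divisor f)) : ℤ)
      = n + d + 1 - C.genus := by
    rw [riemann_roch' C _ (by rw [map_add, hdeg1, ← hd, hn]; linarith [habs.1, habs.2]),
      map_add, hdeg1, ← hd]
  have h3 := finrank_L_add_divisor C f hf (Finsupp.single Pinf n)
  have h4 : (Module.finrank K (C.L (Finsupp.single Pinf n + C.divisor f)) : ℤ)
      = (Module.finrank K (C.L (Finsupp.single Pinf n)) : ℤ) := by exact_mod_cast congrArg (fun m : ℕ => (m : ℤ)) h3
  linarith

end ProjCurveAux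

/-- Let `C` be a genus-3 curve over `K`, `Pinf` a `K`-rational point, and
`D, D'` effective divisors of degree 3 avoiding `Pinf`, with `D + D'` typical:
`L(8·Pinf − D − D') = 0` and `dim L(9·Pinf − D − D') = 1`.  Let `s ≠ 0` lie in
`L(9·Pinf − D − D')`.  Then `div(s) = D + D' + D'' − 9·Pinf` for some effective
divisor `D''` of degree 3, and the class
`[D − 3Pinf] + [D' − 3Pinf] + [D'' − 3Pinf]` is zero in the Jacobian, i.e. the
divisor `(D − 3Pinf) + (D' − 3Pinf) + (D'' − 3Pinf)` is principal. -/
theorem stmt16 (K : Type*) [Field K] (C : ProjCurve K)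
    (hg : C.genus = 3) (Pinf : C.Pt) (hP : C.degPt Pinf = 1)
    (D D' : C.Pt →₀ ℤ) (hDeff : 0 ≤ D) (hD'eff : 0 ≤ D')
    (hdegD : C.degDiv D = 3) (hdegD' : C.degDiv D' = 3)
    (hsupp : D Pinf = 0) (hsupp' : D' Pinf = 0)
    -- typicality of D + D'
    (h8 : C.L (Finsupp.single Pinf 8 - D - D') = ⊥)
    (h9 : Module.finrank K (C.L (Finsupp.single Pinf 9 - D - D')) = 1)
    (s : C.Fn) (hs0 : s ≠ 0) (hs : s ∈ C.L (Finsupp.single Pinf 9 - D - D')) :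
    ∃ D'' : C.Pt →₀ ℤ, 0 ≤ D'' ∧ C.degDiv D'' = 3
      ∧ C.divisor s = D + D' + D'' - Finsupp.single Pinf 9
      ∧ ∃ g : C.Fn, g ≠ 0 ∧ C.divisor g
          = (D - Finsupp.single Pinf 3) + (D' - Finsupp.single Pinf 3)
            + (D'' - Finsupp.single Pinf 3) := by
  open ProjCurveAux in
  refine ⟨C.divisor s + (Finsupp.single Pinf 9 - D - D'), ?_, ?_, ?_, ?_⟩
  · exact (C.mem_L _ s hs0).mp hs
  · rw [degDiv_eq]
    have hds := deg_divisor_eq_zero C Pinf hP s hs0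
    rw [degDiv_eq] at hdegD hdegD'
    simp only [map_add, map_sub, hds, degHom_single C Pinf 9, hP]
    omega
  · abel
  · refine ⟨s, hs0, ?_⟩
    have h3 : Finsupp.single Pinf 3 + Finsupp.single Pinf 3 + Finsupp.single Pinf 3
        = Finsupp.single Pinf (9 : ℤ) := by
      rw [← Finsupp.single_add, ← Finsupp.single_add]
      norm_num
    rw [← h3]
    abel
end
end

section
/- Let K be a field, R = K[x,y]/(f) the coordinate ring of a C_{3,4} curve, and W^N ⊆ R the span of monomials x^i·y^j with 3i + 4j ≤ N and j ≤ 2. Let D, D' be typical degree-3 divisors and s ∈ W^9_{D+D'}, t ∈ W^10_{D+D'} \ W^9_{D+D'} forming an ideal generating set for D + D' (so ⟨s,t⟩ is the ideal of functions vanishing at D + D', and s·W^8 = W^17_{D+D'+D''} where div(s) = D + D' + D'' − 9P∞). Then W^7_{D''} = {ℓ ∈ W^7 : t·ℓ ∈ s·W^8}. -/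
noncomputable section

namespace ProjCurve

variable {K : Type*} [Field K] (C : ProjCurve K)

theorem L_mono {D E : C.Pt →₀ ℤ} (h : D ≤ E) : C.L D ≤ C.L E := by
  intro f hf
  by_cases hf0 : f = 0
  · exact hf0 ▸ zero_mem _
  rw [C.mem_L _ _ hf0] at hf ⊢
  exact hf.trans (add_le_add_right h _)

theorem mul_mem_L {f g : C.Fn} {D E : C.Pt →₀ ℤ} (hf : f ∈ C.L D) (hg : g ∈ C.L E) :
    f * g ∈ C.L (D + E) := by
  by_cases hf0 : f = 0
  · simp [hf0]
  by_cases hg0 : g = 0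
  · simp [hg0]
  rw [C.mem_L _ _ hf0] at hf
  rw [C.mem_L _ _ hg0] at hg
  rw [C.mem_L _ _ (mul_ne_zero hf0 hg0), C.divisor_mul _ _ hf0 hg0]
  calc 0 ≤ (C.divisor f + D) + (C.divisor g + E) := add_nonneg hf hg
    _ = C.divisor f + C.divisor g + (D + E) := by abel

/-- Away from `P`, `s` vanishes exactly on `A + B` while `s` and `t` vanish simultaneously
exactly on `A`; so wherever `B` is positive, `t` vanishes only to the order of `A`, and the
rest of the vanishing of `t * ℓ` along `A + B` must come from `ℓ`. -/
theorem mem_L_sub_of_mul_mem {P : C.Pt} {A B : C.Pt →₀ ℤ} {s t ℓ : C.Fn} {m n n' : ℤ}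
    (hBP : B P = 0) (ht0 : t ≠ 0)
    (hdivs : C.divisor s = A + B - Finsupp.single P n)
    (hcommon : ∀ p, p ≠ P → min (C.divisor s p) (C.divisor t p) = A p)
    (hℓ : ℓ ∈ C.L (Finsupp.single P m)) (htℓ : t * ℓ ∈ C.L (Finsupp.single P n' - A - B)) :
    ℓ ∈ C.L (Finsupp.single P m - B) := by
  by_cases hℓ0 : ℓ = 0
  · exact hℓ0 ▸ zero_mem _
  rw [C.mem_L _ _ hℓ0] at hℓ ⊢
  rw [C.mem_L _ _ (mul_ne_zero ht0 hℓ0), C.divisor_mul _ _ ht0 hℓ0] at htℓ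
  intro p
  have hℓp := hℓ p
  by_cases hp : p = P
  · subst hp
    simpa [hBP] using hℓp
  have htℓp := htℓ p
  have hsp := congrArg (· p) hdivs
  have hmin := hcommon p hp
  simp only [Finsupp.coe_zero, Pi.zero_apply, Finsupp.add_apply, Finsupp.sub_apply,
    Finsupp.single_eq_of_ne' (Ne.symm hp)] at hℓp htℓp hsp ⊢
  omega

end ProjCurve

theorem stmt17_general (K : Type*) [Field K] (C : ProjCurve K)
    (Pinf : C.Pt)
    (D D' D'' : C.Pt →₀ ℤ) (hD''eff : 0 ≤ D'')
    (hsupp'' : D'' Pinf = 0)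
    (s t : C.Fn) (ht0 : t ≠ 0)
    (ht : t ∈ C.L (Finsupp.single Pinf 10 - D - D'))
    -- {s, t} is an IGS for D + D': their only common vanishing is at D + D'
    (hIGS : ∀ p : C.Pt, p ≠ Pinf →
      min (C.divisor s p) (C.divisor t p) = (D + D') p)
    -- div(s) = D + D' + D'' − 9·Pinf
    (hdivs : C.divisor s = D + D' + D'' - Finsupp.single Pinf 9)
    -- s·W^8 = W^17_{D+D'+D''}
    (hsW8 : ∀ u : C.Fn, u ∈ C.L (Finsupp.single Pinf 17 - D - D' - D'')
      ↔ ∃ w ∈ C.L (Finsupp.single Pinf 8), u = s * w) :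
    -- conclusion: W^7_{D''} = {ℓ ∈ W^7 : t·ℓ ∈ s·W^8}
    ∀ ℓ : C.Fn, ℓ ∈ C.L (Finsupp.single Pinf 7 - D'')
      ↔ (ℓ ∈ C.L (Finsupp.single Pinf 7)
          ∧ ∃ w ∈ C.L (Finsupp.single Pinf 8), t * ℓ = s * w) := by
  have h17 : Finsupp.single Pinf 17 - D - D' - D''
      = (Finsupp.single Pinf 10 - D - D') + (Finsupp.single Pinf 7 - D'') := by
    rw [show (17 : ℤ) = 10 + 7 by norm_num, Finsupp.single_add]
    abel
  intro ℓ
  constructor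
  · intro hℓ
    exact ⟨C.L_mono (sub_le_self _ hD''eff) hℓ, (hsW8 _).1 (h17 ▸ C.mul_mem_L ht hℓ)⟩
  · rintro ⟨hℓ, htℓ⟩
    rw [← hsW8, sub_sub _ D D'] at htℓ
    exact C.mem_L_sub_of_mul_mem hsupp'' ht0 hdivs hIGS hℓ htℓ

/-- Setting of Step 2: `D, D'` typical effective degree-3 divisors avoiding the
`K`-rational point `Pinf`, `W^N = L(N·Pinf)`, `s ∈ W^9_{D+D'}` and
`t ∈ W^10_{D+D'} \ W^9_{D+D'}` an ideal generating set for `D + D'` (their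
only common vanishing occurs at `D + D'`), `div(s) = D + D' + D'' − 9·Pinf`
with `D''` effective of degree 3, and `s·W^8 = W^17_{D+D'+D''}`.  Then
`W^7_{D''} = {ℓ ∈ W^7 : t·ℓ ∈ s·W^8}`. -/
theorem stmt17 (K : Type*) [Field K] (C : ProjCurve K)
    (hg : C.genus = 3) (Pinf : C.Pt) (hP : C.degPt Pinf = 1)
    (D D' D'' : C.Pt →₀ ℤ) (hDeff : 0 ≤ D) (hD'eff : 0 ≤ D') (hD''eff : 0 ≤ D'')
    (hdegD : C.degDiv D = 3) (hdegD' : C.degDiv D' = 3) (hdegD'' : C.degDiv D'' = 3)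
    (hsupp : D Pinf = 0) (hsupp' : D' Pinf = 0) (hsupp'' : D'' Pinf = 0)
    -- typicality of D + D'
    (htyp : ∀ N : ℤ, (Module.finrank K (C.L (Finsupp.single Pinf N - D - D')) : ℤ)
      = max 0 (N - 8))
    (s t : C.Fn) (hs0 : s ≠ 0) (ht0 : t ≠ 0)
    (hs : s ∈ C.L (Finsupp.single Pinf 9 - D - D'))
    (ht : t ∈ C.L (Finsupp.single Pinf 10 - D - D'))
    (ht' : t ∉ C.L (Finsupp.single Pinf 9 - D - D'))
    -- {s, t} is an IGS for D + D': their only common vanishing is at D + D'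
    (hIGS : ∀ p : C.Pt, p ≠ Pinf →
      min (C.divisor s p) (C.divisor t p) = (D + D') p)
    -- div(s) = D + D' + D'' − 9·Pinf
    (hdivs : C.divisor s = D + D' + D'' - Finsupp.single Pinf 9)
    -- s·W^8 = W^17_{D+D'+D''}
    (hsW8 : ∀ u : C.Fn, u ∈ C.L (Finsupp.single Pinf 17 - D - D' - D'')
      ↔ ∃ w ∈ C.L (Finsupp.single Pinf 8), u = s * w) :
    -- conclusion: W^7_{D''} = {ℓ ∈ W^7 : t·ℓ ∈ s·W^8}
    ∀ ℓ : C.Fn, ℓ ∈ C.L (Finsupp.single Pinf 7 - D'')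
      ↔ (ℓ ∈ C.L (Finsupp.single Pinf 7)
          ∧ ∃ w ∈ C.L (Finsupp.single Pinf 8), t * ℓ = s * w) :=
  stmt17_general K C Pinf D D' D'' hD''eff hsupp'' s t ht0 ht hIGS hdivs hsW8
end
end
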